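/- Let S be a complete and decomposable SPN over Boolean variables X_1,...,X_N whose root has scope {X_1,...,X_N}, with positive edge weights w. Then the sum of the network polynomial over all inputs equals its value with all indicators set to one: sum over x in {0,1}^N of f_S(x|w) = f_S(1|w). -/

import Mathlib

inductive NodeKind
  | sum
  | prod
  | leaf
deriving DecidableEq

/-- A sum-product network over `N` Boolean variables, with node set `V`:
a rooted DAG (acyclicity witnessed by a rank function) whose leaves are
indicator variables and whose internal nodes are sum or product nodes. -/
structure SPN (V : Type) [Fintype V] [DecidableEq V] (N : ℕ) where
  root : V
  kind : V → NodeKind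
  children : V → Finset V
  leaf_children : ∀ v, kind v = NodeKind.leaf → children v = ∅
  internal_nonempty : ∀ v, kind v ≠ NodeKind.leaf → (children v).Nonempty
  root_no_parent : ∀ u, root ∉ children u
  leafVar : V → Fin N
  leafSign : V → Bool
  rank : V → ℕ
  rank_lt : ∀ v, ∀ u ∈ children v, rank u < rank v

namespace SPN

variable {V : Type} [Fintype V] [DecidableEq V] {N : ℕ}

/-- The value `f_v(·|w)` of every node, where `w` assigns a weight to every
edge `(v,u)` out of a sum node and `L` gives the value of every leaf. -/
noncomputable def evalWith (S : SPN V N) (w : V × V → ℝ) (L : V → ℝ) (v : V) : ℝ :=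
  match S.kind v with
  | NodeKind.leaf => L v
  | NodeKind.sum => ∑ u ∈ (S.children v).attach, w (v, u.1) * S.evalWith w L u.1
  | NodeKind.prod => ∏ u ∈ (S.children v).attach, S.evalWith w L u.1
termination_by S.rank v
decreasing_by
  · exact S.rank_lt v u.1 u.2
  · exact S.rank_lt v u.1 u.2

/-- The leaf values determined by an input `x ∈ {0,1}^N`: the leaf over
variable `X_n` is the indicator `I[x_n = leafSign]`. -/
def ind (S : SPN V N) (x : Fin N → Bool) (v : V) : ℝ :=
  if x (S.leafVar v) = S.leafSign v then 1 else 0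

/-- The scope of a node: its variable at a leaf, the union of the scopes of
the children at an internal node. -/
noncomputable def scope (S : SPN V N) (v : V) : Finset (Fin N) :=
  match S.kind v with
  | NodeKind.leaf => {S.leafVar v}
  | NodeKind.sum => (S.children v).attach.sup fun u => S.scope u.1
  | NodeKind.prod => (S.children v).attach.sup fun u => S.scope u.1
termination_by S.rank v
decreasing_by
  · exact S.rank_lt v u.1 u.2
  · exact S.rank_lt v u.1 u.2

/-- An SPN is complete if all children of every sum node have the same scope. -/
def Complete (S : SPN V N) : Prop :=
  ∀ v, S.kind v = NodeKind.sum →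
    ∀ u₁ ∈ S.children v, ∀ u₂ ∈ S.children v, S.scope u₁ = S.scope u₂

/-- An SPN is decomposable if the children of every product node have
pairwise disjoint scopes. -/
def Decomposable (S : SPN V N) : Prop :=
  ∀ v, S.kind v = NodeKind.prod →
    ∀ u₁ ∈ S.children v, ∀ u₂ ∈ S.children v, u₁ ≠ u₂ →
      Disjoint (S.scope u₁) (S.scope u₂)

/-- `(TV, TE)` is an induced SPN (induced tree) of `S`: a subgraph of `S`,
generated from the root, containing exactly one child of every sum node it
contains and all children of every product node it contains, together with
the corresponding edges. -/
structure IsInducedTree (S : SPN V N) (TV : Finset V) (TE : Finset (V × V)) : Prop where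
  root_mem : S.root ∈ TV
  edges_sub : ∀ e ∈ TE, e.1 ∈ TV ∧ e.2 ∈ TV ∧ e.2 ∈ S.children e.1
  reach : ∀ v ∈ TV, v ≠ S.root → ∃ u, (u, v) ∈ TE
  sum_unique : ∀ v ∈ TV, S.kind v = NodeKind.sum → ∃! u, u ∈ S.children v ∧ u ∈ TV
  sum_edge : ∀ v ∈ TV, S.kind v = NodeKind.sum → ∀ u ∈ S.children v, u ∈ TV → (v, u) ∈ TE
  prod_mem : ∀ v ∈ TV, S.kind v = NodeKind.prod → ∀ u ∈ S.children v, u ∈ TV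
  prod_edge : ∀ v ∈ TV, S.kind v = NodeKind.prod → ∀ u ∈ S.children v, (v, u) ∈ TE

end SPN

/-!
Measure each node against the uniform distribution on inputs: for every node `v`,
`2 ^ |scope v| · 𝔼ₓ f_v(x) = f_v(1)`. A leaf indicator has mean `1/2`. At a sum node both sides
are linear in the children, which share the scope of `v` by completeness. At a product node
decomposability makes the children depend on disjoint sets of variables, hence independent
under the uniform distribution, so the mean of the product is the product of the means. At the
root the scope is all `N` variables and `2 ^ N · 𝔼ₓ = ∑ₓ`.
-/

open Finset
open scoped BigOperators

section Expectation

variable {ι α K : Type*} [Fintype ι] [DecidableEq ι] [Fintype α] [Semifield K] [CharZero K]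

theorem expect_comp_eval (g : α → K) (i : ι) : 𝔼 x : ι → α, g (x i) = 𝔼 a, g a := by
  rcases isEmpty_or_nonempty α with hα | hα
  · have : IsEmpty (ι → α) := ⟨fun x => hα.elim (x i)⟩
    simp
  rw [Fintype.expect_equiv (Equiv.funSplitAt i α) (fun x => g (x i)) (fun p => g p.1)
    fun _ => rfl, ← univ_product_univ, expect_product]
  simp

theorem expect_mul_of_dependsOn_compl {f g : (ι → α) → K} {s : Set ι}
    (hf : DependsOn f s) (hg : DependsOn g sᶜ) :
    𝔼 x, f x * g x = (𝔼 x, f x) * 𝔼 x, g x := by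
  classical
  rcases isEmpty_or_nonempty (ι → α) with hα | hα
  · simp
  -- The involution exchanging the coordinates outside `s` of two inputs `(x, y)` turns the mean
  -- of `f x * g y` into that of `f x * g x`.
  let swap : (ι → α) × (ι → α) → (ι → α) × (ι → α) :=
    fun p => (s.piecewise p.1 p.2, s.piecewise p.2 p.1)
  have hswap : Function.Involutive swap := fun p => by
    ext i <;> by_cases hi : i ∈ s <;> simp [swap, hi]
  have hfg (p : (ι → α) × (ι → α)) : f p.1 * g p.1 = f (swap p).1 * g (swap p).2 := by
    rw [hf fun i hi => (s.piecewise_eq_of_mem _ _ hi).symm,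
      hg fun i hi => (s.piecewise_eq_of_notMem _ _ hi).symm]
  calc 𝔼 x, f x * g x = 𝔼 p : (ι → α) × (ι → α), f p.1 * g p.1 := by
        rw [← univ_product_univ, expect_product' univ univ fun x _ => f x * g x]; simp
    _ = 𝔼 p : (ι → α) × (ι → α), f p.1 * g p.2 :=
        Fintype.expect_bijective swap hswap.bijective _ _ hfg
    _ = (𝔼 x, f x) * 𝔼 x, g x := by
        rw [Fintype.expect_mul_expect, ← univ_product_univ,
          expect_product' univ univ fun x y => f x * g y]

theorem expect_prod_of_dependsOn_pairwiseDisjoint [Nonempty α] {κ : Type*} (t : Finset κ)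
    {s : κ → Set ι} {f : κ → (ι → α) → K} (hs : (t : Set κ).PairwiseDisjoint s)
    (hf : ∀ k ∈ t, DependsOn (f k) (s k)) :
    𝔼 x, ∏ k ∈ t, f k x = ∏ k ∈ t, 𝔼 x, f k x := by
  classical
  induction t using Finset.induction_on with
  | empty => simp
  | insert a t ha ih =>
    have hrest : DependsOn (fun x => ∏ k ∈ t, f k x) (s a)ᶜ := fun x y hxy =>
      prod_congr rfl fun k hk => hf k (mem_insert_of_mem hk) fun i hi =>
        hxy i (Set.disjoint_left.1 (hs (by simp) (by simp [hk]) (by rintro rfl; exact ha hk)) · hi)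
    simp only [prod_insert ha]
    rw [expect_mul_of_dependsOn_compl (hf a (mem_insert_self a t)) hrest,
      ih (hs.subset (by simp)) fun k hk => hf k (mem_insert_of_mem hk)]

end Expectation

namespace SPN

variable {V : Type} [Fintype V] [DecidableEq V] {N : ℕ} (S : SPN V N)

theorem induction_on_children {P : V → Prop} (h : ∀ v, (∀ u ∈ S.children v, P u) → P v)
    (v : V) : P v :=
  (measure S.rank).wf.induction v fun v ih => h v fun u hu => ih u (S.rank_lt v u hu)

variable {S}

theorem evalWith_of_kind_leaf (w : V × V → ℝ) (L : V → ℝ) {v : V}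
    (h : S.kind v = .leaf) : S.evalWith w L v = L v := by
  rw [evalWith, h]

theorem evalWith_of_kind_sum (w : V × V → ℝ) (L : V → ℝ) {v : V}
    (h : S.kind v = .sum) :
    S.evalWith w L v = ∑ u ∈ S.children v, w (v, u) * S.evalWith w L u := by
  rw [evalWith, h, sum_attach _ fun u => w (v, u) * S.evalWith w L u]

theorem evalWith_of_kind_prod (w : V × V → ℝ) (L : V → ℝ) {v : V}
    (h : S.kind v = .prod) : S.evalWith w L v = ∏ u ∈ S.children v, S.evalWith w L u := by
  rw [evalWith, h, prod_attach _ fun u => S.evalWith w L u]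

theorem scope_of_kind_leaf {v : V} (h : S.kind v = .leaf) : S.scope v = {S.leafVar v} := by
  rw [scope, h]

theorem scope_of_kind_ne_leaf {v : V} (h : S.kind v ≠ .leaf) :
    S.scope v = (S.children v).sup S.scope := by
  cases hk : S.kind v <;> rw [scope, hk, sup_attach]; simp_all

theorem scope_subset_of_mem_children {v u : V} (hu : u ∈ S.children v) :
    S.scope u ⊆ S.scope v := by
  have hk : S.kind v ≠ .leaf := fun hk => by simp [S.leaf_children v hk] at hu
  rw [scope_of_kind_ne_leaf hk]
  exact le_sup (f := S.scope) hu

theorem Complete.scope_eq_of_mem_children (hC : S.Complete) {v u : V} (hk : S.kind v = .sum)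
    (hu : u ∈ S.children v) : S.scope v = S.scope u := by
  refine (scope_subset_of_mem_children hu).antisymm' ?_
  rw [scope_of_kind_ne_leaf (by simp [hk])]
  exact Finset.sup_le fun u' hu' => (hC v hk u' hu' u hu).le

theorem Decomposable.pairwiseDisjoint_scope (hD : S.Decomposable) {v : V}
    (hk : S.kind v = .prod) : (S.children v : Set V).PairwiseDisjoint S.scope :=
  fun u₁ hu₁ u₂ hu₂ hne => hD v hk u₁ hu₁ u₂ hu₂ hne

theorem dependsOn_evalWith_ind (w : V × V → ℝ) (v : V) :
    DependsOn (fun x => S.evalWith w (S.ind x) v) (S.scope v) := by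
  induction v using S.induction_on_children with
  | h v ih =>
    intro x y hxy
    have hchild : ∀ u ∈ S.children v, S.evalWith w (S.ind x) u = S.evalWith w (S.ind y) u :=
      fun u hu => ih u hu fun i hi => hxy i (scope_subset_of_mem_children hu hi)
    cases hk : S.kind v with
    | leaf =>
      have hvar : x (S.leafVar v) = y (S.leafVar v) := hxy _ (by simp [scope_of_kind_leaf hk])
      simp only [evalWith_of_kind_leaf w _ hk, ind, hvar]
    | sum =>
      simp only [evalWith_of_kind_sum w _ hk]
      exact sum_congr rfl fun u hu => by rw [hchild u hu]
    | prod =>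
      simp only [evalWith_of_kind_prod w _ hk]
      exact prod_congr rfl hchild

theorem two_pow_card_scope_mul_expect_evalWith_ind (hC : S.Complete) (hD : S.Decomposable)
    (w : V × V → ℝ) (v : V) :
    2 ^ #(S.scope v) * 𝔼 x, S.evalWith w (S.ind x) v = S.evalWith w (fun _ => 1) v := by
  induction v using S.induction_on_children with
  | h v ih =>
    cases hk : S.kind v with
    | leaf =>
      simp only [evalWith_of_kind_leaf w _ hk, scope_of_kind_leaf hk, ind]
      rw [expect_comp_eval (fun c => if c = S.leafSign v then (1 : ℝ) else 0)]
      simp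
    | sum =>
      simp only [evalWith_of_kind_sum w _ hk, expect_sum_comm, mul_sum]
      refine sum_congr rfl fun u hu => ?_
      rw [hC.scope_eq_of_mem_children hk hu, ← ih u hu, ← mul_expect]
      ring
    | prod =>
      have hdisj := hD.pairwiseDisjoint_scope hk
      simp only [evalWith_of_kind_prod w _ hk]
      rw [expect_prod_of_dependsOn_pairwiseDisjoint (S.children v)
          (s := fun u => (S.scope u : Set (Fin N)))
          (fun u₁ hu₁ u₂ hu₂ hne => disjoint_coe.2 (hdisj hu₁ hu₂ hne))
          fun u _ => dependsOn_evalWith_ind w u,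
        scope_of_kind_ne_leaf (by simp [hk]), sup_eq_biUnion, card_biUnion hdisj,
        ← prod_pow_eq_pow_sum, ← prod_mul_distrib]
      exact prod_congr rfl ih

end SPN

theorem sum_network_polynomial_eq_eval_one_general
    {V : Type} [Fintype V] [DecidableEq V] {N : ℕ} (S : SPN V N)
    (hC : S.Complete) (hD : S.Decomposable)
    (hroot : S.scope S.root = Finset.univ)
    (w : V × V → ℝ) :
    ∑ x : Fin N → Bool, S.evalWith w (S.ind x) S.root =
      S.evalWith w (fun _ => 1) S.root := by
  have h := S.two_pow_card_scope_mul_expect_evalWith_ind hC hD w S.root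
  rw [hroot, card_univ, Fintype.card_fin, Fintype.expect_eq_sum_div_card] at h
  rw [← h, Fintype.card_fun, Fintype.card_bool, Fintype.card_fin,
    Nat.cast_pow, Nat.cast_ofNat]
  field_simp

/-- Let `S` be a complete and decomposable SPN over Boolean
variables `X_1, …, X_N` whose root has scope `{X_1, …, X_N}`, with positive
edge weights `w`.  Then the sum of the network polynomial over all inputs
equals its value with all indicators set to one:
`∑_{x ∈ {0,1}^N} f_S(x|w) = f_S(1|w)`. -/
theorem sum_network_polynomial_eq_eval_one
    {V : Type} [Fintype V] [DecidableEq V] {N : ℕ} (S : SPN V N)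
    (hC : S.Complete) (hD : S.Decomposable)
    (hroot : S.scope S.root = Finset.univ)
    (w : V × V → ℝ) (hw : ∀ e, 0 < w e) :
    ∑ x : Fin N → Bool, S.evalWith w (S.ind x) S.root =
      S.evalWith w (fun _ => 1) S.root :=
  sum_network_polynomial_eq_eval_one_general S hC hD hroot w
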